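/- arXiv:1807.09314 — 4 statements merged into one kernel-verified Lean document; each statement's English description precedes it below -/
import Mathlib

section
/- Let ψ(x,y) be a bispectral meromorphic function on U × V, i.e., there is a nonzero operator in F_y(ψ) acting as multiplication by a nonconstant function g(y). If 𝔟 is a differential operator in y with meromorphic coefficients on V such that 𝔟 · ψ(x,y) = 0, then 𝔟 = 0. -/
/-!
The `x`-slices `y ↦ ψ(x, y)`, extended by zero off `V`, span a space `W` of solutions of
`𝔟 f = 0`. If `𝔟 ≠ 0` the solution space is finite-dimensional, since an analytic solution is
determined by its jet at a point where the leading coefficient does not vanish. Being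
finite-dimensional, `W` is closed under pointwise limits, so it contains all `x`-derivatives of
the slices and hence, by `𝔡·ψ = g ψ`, it is invariant under multiplication by `g`. An eigenvector
`f ≠ 0` of this multiplication gives `g f = μ f`, so `g = μ` near a point where `f ≠ 0`, and then
on all of `V` by the identity theorem.
-/

open Filter Topology

section LinearODE

variable {𝕜 : Type*} [NontriviallyNormedField 𝕜]

theorem le_analyticOrderAt_sum {ι : Type*} {s : Finset ι} {f : ι → 𝕜 → 𝕜} {z : 𝕜} {n : ℕ∞}
    (h : ∀ i ∈ s, n ≤ analyticOrderAt (f i) z) : n ≤ analyticOrderAt (∑ i ∈ s, f i) z := by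
  classical
  induction s using Finset.induction_on with
  | empty =>
    rw [Finset.sum_empty, (analyticOrderAt_eq_top (f := (0 : 𝕜 → 𝕜))).mpr
      (.of_forall fun _ => rfl)]
    exact le_top
  | insert i s hi ih =>
    rw [Finset.sum_insert hi]
    refine le_trans ?_ le_analyticOrderAt_add
    exact le_min (h i (s.mem_insert_self i)) (ih fun j hj => h j (Finset.mem_insert_of_mem hj))

variable [CompleteSpace 𝕜]

theorem AnalyticAt.iteratedDeriv {f : 𝕜 → 𝕜} {z : 𝕜} (hf : AnalyticAt 𝕜 f z)
    (k : ℕ) : AnalyticAt 𝕜 (iteratedDeriv k f) z :=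
  iteratedDeriv_eq_iterate (f := f) ▸ hf.iterated_deriv k

theorem analyticOrderAt_iteratedDeriv [CharZero 𝕜]
    {f : 𝕜 → 𝕜} {z : 𝕜} (hf : AnalyticAt 𝕜 f z) {d k : ℕ}
    (hd : analyticOrderAt f z = d) (hk : k ≤ d) :
    analyticOrderAt (iteratedDeriv k f) z = (d - k : ℕ) := by
  rcases Nat.eq_zero_or_pos d with rfl | hd₀
  · obtain rfl : k = 0 := by omega
    simpa using hd
  · rw [iteratedDeriv_eq_iterate]
    exact analyticOrderAt_iterated_deriv hf hd.symm hd₀.ne' hk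

theorem eventuallyEq_zero_of_sum_iteratedDeriv [CharZero 𝕜]
    {r : ℕ} {b : ℕ → 𝕜 → 𝕜} {f : 𝕜 → 𝕜} {y₀ : 𝕜}
    (hb : ∀ k ≤ r, AnalyticAt 𝕜 (b k) y₀) (hbr : b r y₀ ≠ 0) (hf : AnalyticAt 𝕜 f y₀)
    (hode : ∀ᶠ y in 𝓝 y₀, ∑ k ∈ Finset.range (r + 1), b k y * iteratedDeriv k f y = 0)
    (hjet : ∀ k < r, iteratedDeriv k f y₀ = 0) :
    f =ᶠ[𝓝 y₀] 0 := by
  refine analyticOrderAt_eq_top.mp ?_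
  by_contra hfin
  obtain ⟨d, hd⟩ := ENat.ne_top_iff_exists.mp hfin
  have hrd : r ≤ d := by
    exact_mod_cast hd ▸ (natCast_le_analyticOrderAt_iff_iteratedDeriv_eq_zero hf).mpr hjet
  -- If `f` had finite order `d` at `y₀`, the term `b r * f⁽ʳ⁾` would have order exactly `d - r`,
  -- strictly below the order of every other term, so the sum could not vanish.
  have hterm : ∀ k ≤ r, analyticOrderAt (b k * iteratedDeriv k f) y₀
      = analyticOrderAt (b k) y₀ + (d - k : ℕ) := fun k hk => by
    rw [analyticOrderAt_mul (hb k hk) (hf.iteratedDeriv k),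
      analyticOrderAt_iteratedDeriv hf hd.symm (hk.trans hrd)]
  have hlow : ((d - r + 1 : ℕ) : ℕ∞) ≤
      analyticOrderAt (∑ k ∈ Finset.range r, b k * iteratedDeriv k f) y₀ := by
    refine le_analyticOrderAt_sum fun k hk => ?_
    have hk := Finset.mem_range.mp hk
    rw [hterm k hk.le]
    exact le_add_left (by exact_mod_cast (by omega : d - r + 1 ≤ d - k))
  have hlead : analyticOrderAt (b r * iteratedDeriv r f) y₀ = (d - r : ℕ) := by
    rw [hterm r le_rfl, (hb r le_rfl).analyticOrderAt_eq_zero.mpr hbr, zero_add]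
  have hsum : analyticOrderAt (∑ k ∈ Finset.range (r + 1), b k * iteratedDeriv k f) y₀ = ⊤ := by
    rw [analyticOrderAt_eq_top]
    filter_upwards [hode] with y hy
    simpa [Finset.sum_apply] using hy
  rw [Finset.sum_range_succ, analyticOrderAt_add_eq_right_of_lt, hlead] at hsum
  · exact ENat.natCast_ne_top _ hsum
  · rw [hlead]
    exact lt_of_lt_of_le (by exact_mod_cast Nat.lt_succ_self _) hlow

/-- Solutions are extended by zero outside `V`, so that they form a subspace of `𝕜 → 𝕜` on which
the jet at a point of `V` is injective. -/
def linearODESolutions (V : Set 𝕜) (m : ℕ) (b : ℕ → 𝕜 → 𝕜) : Submodule 𝕜 (𝕜 → 𝕜) where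
  carrier := {f | (∀ y ∉ V, f y = 0) ∧ AnalyticOnNhd 𝕜 f V ∧
    ∀ y ∈ V, ∑ k ∈ Finset.range (m + 1), b k y * iteratedDeriv k f y = 0}
  zero_mem' := ⟨fun _ _ => rfl, fun _ _ => analyticAt_const, fun y _ => by simp⟩
  add_mem' := by
    rintro f g ⟨hf₀, hf, hfode⟩ ⟨hg₀, hg, hgode⟩
    refine ⟨fun y hy => by simp [hf₀ y hy, hg₀ y hy], hf.add hg, fun y hy => ?_⟩
    simp only [iteratedDeriv_add (hf y hy).contDiffAt (hg y hy).contDiffAt, mul_add,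
      Finset.sum_add_distrib, hfode y hy, hgode y hy, add_zero]
  smul_mem' := by
    rintro c f ⟨hf₀, hf, hfode⟩
    refine ⟨fun y hy => by simp [hf₀ y hy], hf.const_smul, fun y hy => ?_⟩
    simp only [iteratedDeriv_const_smul_field, smul_eq_mul, mul_left_comm _ c,
      ← Finset.mul_sum, hfode y hy, mul_zero]

theorem indicator_mem_linearODESolutions {V : Set 𝕜} (hV : IsOpen V) {m : ℕ} {b : ℕ → 𝕜 → 𝕜}
    {f : 𝕜 → 𝕜} (hf : AnalyticOnNhd 𝕜 f V)
    (hode : ∀ y ∈ V, ∑ k ∈ Finset.range (m + 1), b k y * iteratedDeriv k f y = 0) :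
    V.indicator f ∈ linearODESolutions V m b := by
  have hloc : ∀ y ∈ V, V.indicator f =ᶠ[𝓝 y] f := fun y hy => by
    filter_upwards [hV.mem_nhds hy] with z hz using Set.indicator_of_mem hz f
  refine ⟨fun y hy => Set.indicator_of_notMem hy f, fun y hy => (hf y hy).congr (hloc y hy).symm,
    fun y hy => ?_⟩
  simpa only [(hloc y hy).iteratedDeriv_eq] using hode y hy

theorem linearODESolutions_eq_of_coeff_eq_zero {V : Set 𝕜} {b : ℕ → 𝕜 → 𝕜} {r m : ℕ}
    (hrm : r ≤ m) (hb : ∀ k, r < k → k ≤ m → ∀ y ∈ V, b k y = 0) :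
    linearODESolutions V m b = linearODESolutions V r b := by
  have hsum : ∀ f, ∀ y ∈ V, ∑ k ∈ Finset.range (m + 1), b k y * iteratedDeriv k f y
      = ∑ k ∈ Finset.range (r + 1), b k y * iteratedDeriv k f y := fun f y hy =>
    (Finset.sum_subset (Finset.range_subset_range.mpr (by omega)) fun k hkm hkr => by
      simp only [Finset.mem_range] at hkm hkr
      rw [hb k (by omega) (by omega) y hy, zero_mul]).symm
  ext f
  simp +contextual only [linearODESolutions, Submodule.mem_mk, AddSubmonoid.mem_mk,
    AddSubsemigroup.mem_mk, Set.mem_ofPred_eq, hsum]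

theorem finiteDimensional_linearODESolutions_of_leading [CharZero 𝕜] {V : Set 𝕜} (hV : IsOpen V)
    (hVc : IsPreconnected V) {r : ℕ} {b : ℕ → 𝕜 → 𝕜} (hb : ∀ k, AnalyticOnNhd 𝕜 (b k) V)
    {y₀ : 𝕜} (hy₀ : y₀ ∈ V) (hbr : b r y₀ ≠ 0) :
    FiniteDimensional 𝕜 (linearODESolutions V r b) := by
  let jet : linearODESolutions V r b →ₗ[𝕜] Fin r → 𝕜 :=
    { toFun := fun f i => iteratedDeriv i f y₀
      map_add' := fun f g => funext fun i =>
        iteratedDeriv_add (f.2.2.1 y₀ hy₀).contDiffAt (g.2.2.1 y₀ hy₀).contDiffAt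
      map_smul' := fun c f => funext fun i => iteratedDeriv_const_smul_field c f.1 }
  refine FiniteDimensional.of_injective jet (LinearMap.ker_eq_bot.mp ?_)
  refine LinearMap.ker_eq_bot'.mpr fun ⟨f, hf₀, hf, hode⟩ hjet => Subtype.ext (funext fun y => ?_)
  have hnear : f =ᶠ[𝓝 y₀] 0 :=
    eventuallyEq_zero_of_sum_iteratedDeriv (fun k _ => hb k y₀ hy₀) hbr (hf y₀ hy₀)
      (eventually_of_mem (hV.mem_nhds hy₀) hode) fun k hk => congrFun hjet ⟨k, hk⟩
  by_cases hy : y ∈ V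
  · exact hf.eqOn_zero_of_preconnected_of_eventuallyEq_zero hVc hy₀ hnear hy
  · exact hf₀ y hy

theorem finiteDimensional_linearODESolutions [CharZero 𝕜] {V : Set 𝕜} (hV : IsOpen V)
    (hVc : IsPreconnected V) {m : ℕ} {b : ℕ → 𝕜 → 𝕜} (hb : ∀ k, AnalyticOnNhd 𝕜 (b k) V)
    (hb₀ : ∃ k ≤ m, ∃ y ∈ V, b k y ≠ 0) :
    FiniteDimensional 𝕜 (linearODESolutions V m b) := by
  classical
  obtain ⟨k, hkm, hk⟩ := hb₀
  let r := Nat.findGreatest (fun k => ∃ y ∈ V, b k y ≠ 0) m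
  obtain ⟨y₀, hy₀, hbr⟩ : ∃ y ∈ V, b r y ≠ 0 :=
    Nat.findGreatest_spec (P := fun k => ∃ y ∈ V, b k y ≠ 0) hkm hk
  have hhigh : ∀ k, r < k → k ≤ m → ∀ y ∈ V, b k y = 0 := fun k hrk hkm y hy => by
    by_contra hne
    exact Nat.findGreatest_is_greatest hrk hkm ⟨y, hy, hne⟩
  rw [linearODESolutions_eq_of_coeff_eq_zero (Nat.findGreatest_le m) hhigh]
  exact finiteDimensional_linearODESolutions_of_leading hV hVc hb hy₀ hbr

end LinearODE

theorem Submodule.mem_of_tendsto_slope {𝕜 F : Type*} [NontriviallyNormedField 𝕜] [AddCommGroup F]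
    [Module 𝕜 F] [TopologicalSpace F] {W : Submodule 𝕜 F} (hW : IsClosed (W : Set F))
    {φ : 𝕜 → F} {x : 𝕜} {φ' : F} (hφ : ∀ᶠ t in 𝓝 x, φ t ∈ W)
    (h : Tendsto (slope φ x) (𝓝[≠] x) (𝓝 φ')) : φ' ∈ W := by
  refine hW.mem_of_tendsto h ?_
  filter_upwards [nhdsWithin_le_nhds hφ] with t ht
  exact W.smul_mem _ (W.sub_mem ht hφ.self_of_nhds)

theorem tendsto_slope_pi {𝕜 ι : Type*} [NontriviallyNormedField 𝕜] {φ : 𝕜 → ι → 𝕜}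
    {φ' : ι → 𝕜} {x : 𝕜} (h : ∀ i, HasDerivAt (fun t => φ t i) (φ' i) x) :
    Tendsto (slope φ x) (𝓝[≠] x) (𝓝 φ') :=
  tendsto_pi_nhds.mpr fun i => hasDerivAt_iff_tendsto_slope.mp (h i)

theorem Submodule.iteratedDeriv_mem_of_forall_mem {𝕜 ι : Type*} [NontriviallyNormedField 𝕜]
    [CompleteSpace 𝕜] {W : Submodule 𝕜 (ι → 𝕜)} (hW : IsClosed (W : Set (ι → 𝕜)))
    {U : Set 𝕜} (hU : IsOpen U) {Φ : 𝕜 → ι → 𝕜} (hΦ : ∀ x ∈ U, ∀ i, AnalyticAt 𝕜 (fun t => Φ t i) x)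
    (hΦW : ∀ x ∈ U, Φ x ∈ W) (j : ℕ) :
    ∀ x ∈ U, (fun i => iteratedDeriv j (fun t => Φ t i) x) ∈ W := by
  induction j with
  | zero => simpa using hΦW
  | succ j ih =>
    refine fun x hx => W.mem_of_tendsto_slope hW (eventually_of_mem (hU.mem_nhds hx) ih)
      (tendsto_slope_pi fun i => ?_)
    rw [iteratedDeriv_succ]
    exact (((hΦ x hx i).iteratedDeriv j).differentiableAt).hasDerivAt

theorem Submodule.exists_ne_zero_apply_eq_smul {K M : Type*} [Field K] [IsAlgClosed K]
    [AddCommGroup M] [Module K M] (W : Submodule K M) [FiniteDimensional K W] [Nontrivial W]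
    (T : M →ₗ[K] M) (hT : ∀ f ∈ W, T f ∈ W) : ∃ f ∈ W, f ≠ 0 ∧ ∃ μ : K, T f = μ • f := by
  obtain ⟨μ, hμ⟩ := Module.End.exists_eigenvalue (T.restrict hT)
  obtain ⟨f, hf, hf₀⟩ := hμ.exists_hasEigenvector
  exact ⟨f, f.2, fun h => hf₀ (Subtype.ext h), μ,
    congrArg Subtype.val (Module.End.mem_eigenspace_iff.mp hf)⟩

theorem AnalyticOnNhd.eqOn_const_of_mul_eq_mul {𝕜 : Type*} [NontriviallyNormedField 𝕜] {V : Set 𝕜}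
    (hV : IsOpen V) (hVc : IsPreconnected V) {g f : 𝕜 → 𝕜} (hg : AnalyticOnNhd 𝕜 g V) {y₀ : 𝕜}
    (hy₀ : y₀ ∈ V) (hf : ContinuousAt f y₀) (hfy₀ : f y₀ ≠ 0) {μ : 𝕜}
    (h : ∀ y ∈ V, g y * f y = μ * f y) : Set.EqOn g (fun _ => μ) V := by
  refine hg.eqOn_of_preconnected_of_eventuallyEq analyticOnNhd_const hVc hy₀ ?_
  filter_upwards [hV.mem_nhds hy₀, hf.eventually_ne hfy₀] with y hy hfy
  exact mul_right_cancel₀ hfy (h y hy)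

theorem span_indicator_ne_bot {𝕜 ι : Type*} [Field 𝕜] {U : Set 𝕜} {V : Set ι}
    {ψ : 𝕜 → ι → 𝕜} {x : 𝕜} (hx : x ∈ U) {y : ι} (hy : y ∈ V) (hψ : ψ x y ≠ 0) :
    Submodule.span 𝕜 ((fun x => V.indicator (ψ x)) '' U) ≠ ⊥ := by
  refine (Submodule.ne_bot_iff _).mpr ⟨_, Submodule.subset_span ⟨x, hx, rfl⟩, fun h0 => hψ ?_⟩
  simpa [Set.indicator_of_mem hy] using congrFun h0 y

theorem mul_mem_span_indicator_of_eigen {𝕜 ι : Type*} [NontriviallyNormedField 𝕜] [CompleteSpace 𝕜]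
    {U : Set 𝕜} {V : Set ι} (hU : IsOpen U) {ψ : 𝕜 → ι → 𝕜}
    (hψ : ∀ x ∈ U, ∀ y ∈ V, AnalyticAt 𝕜 (fun t => ψ t y) x) {n : ℕ} {c : ℕ → 𝕜 → 𝕜} {g : ι → 𝕜}
    (heig : ∀ x ∈ U, ∀ y ∈ V,
      ∑ j ∈ Finset.range (n + 1), c j x * iteratedDeriv j (fun t => ψ t y) x = g y * ψ x y)
    (hW : IsClosed (Submodule.span 𝕜 ((fun x => V.indicator (ψ x)) '' U) : Set (ι → 𝕜))) :
    ∀ f ∈ Submodule.span 𝕜 ((fun x => V.indicator (ψ x)) '' U),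
      g * f ∈ Submodule.span 𝕜 ((fun x => V.indicator (ψ x)) '' U) := by
  set W := Submodule.span 𝕜 ((fun x => V.indicator (ψ x)) '' U)
  have hder := W.iteratedDeriv_mem_of_forall_mem hW hU
    (fun x hx y => by
      by_cases hy : y ∈ V
      · simpa only [Set.indicator_of_mem hy] using hψ x hx y hy
      · simpa only [Set.indicator_of_notMem hy] using analyticAt_const)
    (fun x hx => Submodule.subset_span ⟨x, hx, rfl⟩)
  have hgen : ∀ x ∈ U, g * V.indicator (ψ x) = ∑ j ∈ Finset.range (n + 1),
      c j x • fun y => iteratedDeriv j (fun t => V.indicator (ψ t) y) x := fun x hx => by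
    ext y
    by_cases hy : y ∈ V
    · simp [Set.indicator_of_mem hy, heig x hx y hy]
    · simp [Set.indicator_of_notMem hy]
  suffices W ≤ W.comap (LinearMap.mulLeft 𝕜 g) from fun f hf => this hf
  refine Submodule.span_le.mpr ?_
  rintro _ ⟨x, hx, rfl⟩
  simpa [hgen x hx] using Submodule.sum_mem _ fun j _ => W.smul_mem (c j x) (hder j x hx)

theorem bispectral_right_operator_faithful_general
    (U V : Set ℂ) (hUo : IsOpen U) (hVo : IsOpen V)
    (hVc : IsConnected V)
    (ψ : ℂ → ℂ → ℂ)
    (hψy : ∀ x ∈ U, ∀ y ∈ V, AnalyticAt ℂ (ψ x) y)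
    (hψx : ∀ x ∈ U, ∀ y ∈ V, AnalyticAt ℂ (fun t => ψ t y) x)
    (hψnc : ∃ x₁ ∈ U, ∃ y₁ ∈ V, ∃ x₂ ∈ U, ∃ y₂ ∈ V, ψ x₁ y₁ ≠ ψ x₂ y₂)
    (n : ℕ) (c : ℕ → ℂ → ℂ) (g : ℂ → ℂ)
    (hgan : ∀ y ∈ V, AnalyticAt ℂ g y)
    (hgnc : ∃ y₁ ∈ V, ∃ y₂ ∈ V, g y₁ ≠ g y₂)
    (heig : ∀ x ∈ U, ∀ y ∈ V,
      (∑ j ∈ Finset.range (n + 1), c j x * iteratedDeriv j (fun t => ψ t y) x) = g y * ψ x y)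
    (m : ℕ) (b : ℕ → ℂ → ℂ)
    (hban : ∀ k, ∀ y ∈ V, AnalyticAt ℂ (b k) y)
    (hker : ∀ x ∈ U, ∀ y ∈ V,
      (∑ k ∈ Finset.range (m + 1), b k y * iteratedDeriv k (ψ x) y) = 0) :
    ∀ k ≤ m, ∀ y ∈ V, b k y = 0 := by
  by_contra! hb
  set W := Submodule.span ℂ ((fun x => V.indicator (ψ x)) '' U)
  have hWsol : W ≤ linearODESolutions V m b := Submodule.span_le.mpr <| by
    rintro _ ⟨x, hx, rfl⟩
    exact indicator_mem_linearODESolutions hVo (hψy x hx) (hker x hx)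
  have := finiteDimensional_linearODESolutions hVo hVc.isPreconnected hban hb
  have := Submodule.finiteDimensional_of_le hWsol
  have : Nontrivial W := by
    obtain ⟨x, hx, y, hy, hψ⟩ : ∃ x ∈ U, ∃ y ∈ V, ψ x y ≠ 0 := by
      by_contra! h
      obtain ⟨x₁, hx₁, y₁, hy₁, x₂, hx₂, y₂, hy₂, hne⟩ := hψnc
      exact hne (by rw [h x₁ hx₁ y₁ hy₁, h x₂ hx₂ y₂ hy₂])
    exact Submodule.nontrivial_iff_ne_bot.mpr (span_indicator_ne_bot hx hy hψ)
  obtain ⟨f, hfW, hf, μ, hμ⟩ := W.exists_ne_zero_apply_eq_smul (LinearMap.mulLeft ℂ g)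
    (mul_mem_span_indicator_of_eigen hUo hψx heig (Submodule.closed_of_finiteDimensional W))
  obtain ⟨y₀, hy₀⟩ := Function.ne_iff.mp hf
  obtain ⟨hf₀, hfan, -⟩ := hWsol hfW
  have hy₀V : y₀ ∈ V := by_contra fun h => hy₀ (hf₀ y₀ h)
  have hgμ := AnalyticOnNhd.eqOn_const_of_mul_eq_mul hVo hVc.isPreconnected hgan hy₀V
    (hfan y₀ hy₀V).continuousAt hy₀ fun y _ => congrFun hμ y
  obtain ⟨y₁, hy₁, y₂, hy₂, hne⟩ := hgnc
  exact hne (by rw [hgμ hy₁, hgμ hy₂])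

/-- Let `ψ(x,y)` be a nonconstant bispectral meromorphic function on the connected open
set `U × V`: there is a differential operator in `x` with `𝔡·ψ = g(y)ψ` for a nonconstant
meromorphic `g`. If `𝔟 = ∑_{k ≤ m} b_k(y) ∂_y^k` is a differential operator in `y` with
meromorphic (analytic on `V`) coefficients such that `𝔟·ψ = 0`, then `𝔟 = 0`. -/
theorem bispectral_right_operator_faithful
    (U V : Set ℂ) (hUo : IsOpen U) (hVo : IsOpen V)
    (hUc : IsConnected U) (hVc : IsConnected V)
    (ψ : ℂ → ℂ → ℂ)
    (hψy : ∀ x ∈ U, ∀ y ∈ V, AnalyticAt ℂ (ψ x) y)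
    (hψx : ∀ x ∈ U, ∀ y ∈ V, AnalyticAt ℂ (fun t => ψ t y) x)
    (hψnc : ∃ x₁ ∈ U, ∃ y₁ ∈ V, ∃ x₂ ∈ U, ∃ y₂ ∈ V, ψ x₁ y₁ ≠ ψ x₂ y₂)
    (n : ℕ) (c : ℕ → ℂ → ℂ) (g : ℂ → ℂ)
    (hgan : ∀ y ∈ V, AnalyticAt ℂ g y)
    (hgnc : ∃ y₁ ∈ V, ∃ y₂ ∈ V, g y₁ ≠ g y₂)
    (heig : ∀ x ∈ U, ∀ y ∈ V,
      (∑ j ∈ Finset.range (n + 1), c j x * iteratedDeriv j (fun t => ψ t y) x) = g y * ψ x y)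
    (m : ℕ) (b : ℕ → ℂ → ℂ)
    (hban : ∀ k, ∀ y ∈ V, AnalyticAt ℂ (b k) y)
    (hker : ∀ x ∈ U, ∀ y ∈ V,
      (∑ k ∈ Finset.range (m + 1), b k y * iteratedDeriv k (ψ x) y) = 0) :
    ∀ k ≤ m, ∀ y ∈ V, b k y = 0 :=
  bispectral_right_operator_faithful_general U V hUo hVo hVc ψ hψy hψx hψnc n c g hgan hgnc heig m b
    hban hker
end

section
/- The square of the Bessel operator also factorizes as (∂_x² − ν(ν+1)/x²)² = (∂_x² + (2ν+3)/x · ∂_x + ν(ν+2)/x²)(∂_x² − (2ν+3)/x · ∂_x + (ν+1)(ν+3)/x²) for every ν ∈ ℂ. -/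
/-- The Bessel operator `∂_x² − ν(ν+1)/x²` acting on functions on `(0,∞)`. -/
noncomputable def besselOp (ν : ℂ) (f : ℝ → ℂ) (x : ℝ) : ℂ :=
  deriv (deriv f) x - (ν * (ν + 1) / (x : ℂ) ^ 2) * f x

/-- A second-order operator `∂_x² + (α/x) ∂_x + β/x²` with rational coefficients. -/
noncomputable def ratOp (α β : ℂ) (f : ℝ → ℂ) (x : ℝ) : ℂ :=
  deriv (deriv f) x + (α / (x : ℂ)) * deriv f x + (β / (x : ℂ) ^ 2) * f x

/-!
Write `L a b = ∂² + (a/x) ∂ + b/x²`, so that the Bessel operator is `L 0 (-ν(ν+1))`. Two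
differentiations show that a composite `L a b ∘ L a' b'` is again an Euler-type operator: its
coefficient of `∂ᵏ` is `x^(k-4)` times a polynomial in `a, b, a', b'`. Both sides of the
factorization are such composites, and their five coefficients agree as polynomials in `ν`.
-/

open Topology

theorem besselOp_eq_ratOp (ν : ℂ) : besselOp ν = ratOp 0 (-(ν * (ν + 1))) := by
  ext f x
  simp only [besselOp, ratOp]
  ring

theorem ContDiffOn.differentiableAt_iterate_deriv {𝕜 F : Type*} [NontriviallyNormedField 𝕜]
    [NormedAddCommGroup F] [NormedSpace 𝕜 F] {f : 𝕜 → F} {s : Set 𝕜} {n : WithTop ℕ∞} {k : ℕ}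
    (hf : ContDiffOn 𝕜 n f s) (hs : IsOpen s) (hk : (k : WithTop ℕ∞) + 1 ≤ n) {x : 𝕜}
    (hx : x ∈ s) : DifferentiableAt 𝕜 (deriv^[k] f) x := by
  induction k generalizing f n with
  | zero =>
    exact (hf.differentiableOn (by simpa using (zero_lt_one.trans_le hk).ne')).differentiableAt
      (hs.mem_nhds hx)
  | succ k ih =>
    rw [Function.iterate_succ]
    exact ih (hf.deriv_of_isOpen hs hk) le_rfl

theorem hasDerivAt_div_pow_mul (c : ℂ) (n : ℕ) {g : ℝ → ℂ} {g' : ℂ} {y : ℝ} (hy : y ≠ 0)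
    (hg : HasDerivAt g g' y) :
    HasDerivAt (fun t : ℝ => c / (t : ℂ) ^ n * g t)
      (c / (y : ℂ) ^ n * g' - n * c / (y : ℂ) ^ (n + 1) * g y) y := by
  have hyc : (y : ℂ) ≠ 0 := Complex.ofReal_ne_zero.mpr hy
  have hpow : HasDerivAt (fun t : ℝ => (t : ℂ) ^ n) (n * (y : ℂ) ^ (n - 1)) y :=
    (hasDerivAt_pow n (y : ℂ)).comp_ofReal
  refine (((hasDerivAt_const y c).div hpow (pow_ne_zero n hyc)).mul hg).congr_deriv ?_
  rcases n with _ | n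
  · simp
  · simp only [Pi.div_apply, Nat.add_sub_cancel]
    field_simp
    push_cast
    ring

theorem hasDerivAt_ratOp (a b : ℂ) {f : ℝ → ℂ} {s : Set ℝ} (hs : IsOpen s)
    (hf : ContDiffOn ℝ 3 f s) {y : ℝ} (hy : y ∈ s) (hy₀ : y ≠ 0) :
    HasDerivAt (ratOp a b f) (ratOp a (b - a) (deriv f) y - 2 * b / (y : ℂ) ^ 3 * f y) y := by
  have hd₀ : DifferentiableAt ℝ f y :=
    hf.differentiableAt_iterate_deriv (k := 0) hs (by norm_num) hy
  have hd₁ : DifferentiableAt ℝ (deriv f) y :=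
    hf.differentiableAt_iterate_deriv (k := 1) hs (by norm_num) hy
  have hd₂ : DifferentiableAt ℝ (deriv (deriv f)) y :=
    hf.differentiableAt_iterate_deriv (k := 2) hs (by norm_num) hy
  have h := (hd₂.hasDerivAt.add (hasDerivAt_div_pow_mul a 1 hy₀ hd₁.hasDerivAt)).add
    (hasDerivAt_div_pow_mul b 2 hy₀ hd₀.hasDerivAt)
  have hratOp : ratOp a b f = (deriv (deriv f) + fun t : ℝ => a / (t : ℂ) ^ 1 * deriv f t)
      + fun t : ℝ => b / (t : ℂ) ^ 2 * f t := by
    ext t; simp only [ratOp, Pi.add_apply, pow_one]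
  rw [hratOp]
  refine h.congr_deriv ?_
  have hyc : (y : ℂ) ≠ 0 := Complex.ofReal_ne_zero.mpr hy₀
  simp only [ratOp]
  field_simp
  push_cast
  ring

theorem deriv_deriv_ratOp (a b : ℂ) {f : ℝ → ℂ} {s : Set ℝ} (hs : IsOpen s)
    (hf : ContDiffOn ℝ 4 f s) {x : ℝ} (hx : x ∈ s) (hx₀ : x ≠ 0) :
    deriv (deriv (ratOp a b f)) x =
      deriv (deriv (deriv (deriv f))) x + a / x * deriv (deriv (deriv f)) x
        + (b - 2 * a) / (x : ℂ) ^ 2 * deriv (deriv f) x + (2 * a - 4 * b) / (x : ℂ) ^ 3 * deriv f x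
        + 6 * b / (x : ℂ) ^ 4 * f x := by
  have hderiv : deriv (ratOp a b f) =ᶠ[𝓝 x]
      fun y : ℝ => ratOp a (b - a) (deriv f) y - 2 * b / (y : ℂ) ^ 3 * f y := by
    filter_upwards [(hs.inter isOpen_ne).mem_nhds ⟨hx, hx₀⟩] with y ⟨hy, hy₀⟩
    exact (hasDerivAt_ratOp a b hs (hf.of_le (by norm_num)) hy hy₀).deriv
  have hd₀ : DifferentiableAt ℝ f x :=
    hf.differentiableAt_iterate_deriv (k := 0) hs (by norm_num) hx
  have h := (hasDerivAt_ratOp a (b - a) hs (hf.deriv_of_isOpen hs (by norm_num)) hx hx₀).sub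
    (hasDerivAt_div_pow_mul (2 * b) 3 hx₀ hd₀.hasDerivAt)
  rw [hderiv.deriv_eq]
  refine h.deriv.trans ?_
  have hxc : (x : ℂ) ≠ 0 := Complex.ofReal_ne_zero.mpr hx₀
  simp only [ratOp]
  field_simp
  push_cast
  ring

theorem ratOp_ratOp (a b a' b' : ℂ) {f : ℝ → ℂ} {s : Set ℝ} (hs : IsOpen s)
    (hf : ContDiffOn ℝ 4 f s) {x : ℝ} (hx : x ∈ s) (hx₀ : x ≠ 0) :
    ratOp a b (ratOp a' b' f) x =
      deriv (deriv (deriv (deriv f))) x + (a + a') / x * deriv (deriv (deriv f)) x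
        + (b + b' + a * a' - 2 * a') / (x : ℂ) ^ 2 * deriv (deriv f) x
        + (2 * a' - 4 * b' - a * a' + a * b' + a' * b) / (x : ℂ) ^ 3 * deriv f x
        + (6 * b' - 2 * a * b' + b * b') / (x : ℂ) ^ 4 * f x := by
  rw [ratOp, deriv_deriv_ratOp a' b' hs hf hx hx₀,
    (hasDerivAt_ratOp a' b' hs (hf.of_le (by norm_num)) hx hx₀).deriv]
  simp only [ratOp]
  have hxc : (x : ℂ) ≠ 0 := Complex.ofReal_ne_zero.mpr hx₀
  field_simp
  ring

/-- The square of the Bessel operator also factorizes as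
`(∂² − ν(ν+1)/x²)² = (∂² + (2ν+3)/x ∂ + ν(ν+2)/x²)(∂² − (2ν+3)/x ∂ + (ν+1)(ν+3)/x²)`
on 4-times differentiable functions on `(0,∞)`, for every `ν ∈ ℂ`. -/
theorem bessel_square_factorization' (ν : ℂ) :
    ∀ f : ℝ → ℂ, ContDiffOn ℝ 4 f (Set.Ioi 0) → ∀ x ∈ Set.Ioi (0 : ℝ),
      besselOp ν (fun t => besselOp ν f t) x =
        ratOp (2 * ν + 3) (ν * (ν + 2))
          (fun t => ratOp (-(2 * ν + 3)) ((ν + 1) * (ν + 3)) f t) x := by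
  intro f hf x hx
  have hx₀ : x ≠ 0 := (Set.mem_Ioi.mp hx).ne'
  simp only [besselOp_eq_ratOp]
  rw [ratOp_ratOp _ _ _ _ isOpen_Ioi hf hx hx₀, ratOp_ratOp _ _ _ _ isOpen_Ioi hf hx hx₀]
  ring
end

section
/- For s, t > 0, the differential operator 𝔡 = (x² − t²)∂_x² + 2x∂_x + s²x² commutes with the integral operator T(f)(x) = ∫_{−t}^{t} (sin(s(x+y))/(x+y)) f(y) dy on C_c^∞((−t,t)): for all f ∈ C_c^∞((−t,t)) and x ∈ (−t,t), 𝔡·(Tf)(x) = T(𝔡·f)(x). -/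
open MeasureTheory Set Filter
open scoped Convolution ContDiff Topology

/-- The sine kernel `sin(s(x+y))/(x+y)`, extended by the value `s` at `x+y = 0`. -/
noncomputable def sincKernel (s : ℝ) (x y : ℝ) : ℝ :=
  if x + y = 0 then s else Real.sin (s * (x + y)) / (x + y)

/-- The prolate spheroidal differential operator
`𝔡 = (x² − t²)∂² + 2x∂ + s²x²`. -/
noncomputable def prolateOp (s t : ℝ) (u : ℝ → ℝ) (x : ℝ) : ℝ :=
  (x ^ 2 - t ^ 2) * deriv (deriv u) x + 2 * x * deriv u x + s ^ 2 * x ^ 2 * u x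

/-- One-variable version of the sine kernel. -/
noncomputable def sincG (s : ℝ) (u : ℝ) : ℝ :=
  if u = 0 then s else Real.sin (s * u) / u

lemma sincKernel_eq (s x y : ℝ) : sincKernel s x y = sincG s (x + y) := rfl

lemma mul_sincG (s u : ℝ) : u * sincG s u = Real.sin (s * u) := by
  unfold sincG
  split_ifs with h
  · simp [h]
  · field_simp

lemma continuous_sincG (s : ℝ) : Continuous (sincG s) := by
  rw [continuous_iff_continuousAt]
  intro u
  rcases eq_or_ne u 0 with rfl | hu
  · have hd : HasDerivAt (fun v : ℝ => Real.sin (s * v)) s 0 := by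
      have h1 : HasDerivAt (fun v : ℝ => s * v) (s * 1) 0 := (hasDerivAt_id (0 : ℝ)).const_mul s
      have h2 := (Real.hasDerivAt_sin (s * 0)).comp (0 : ℝ) h1
      simpa [Function.comp_def] using h2
    have hslope := hasDerivAt_iff_tendsto_slope.mp hd
    have hcong : Tendsto (sincG s) (𝓝[≠] (0 : ℝ)) (𝓝 s) := by
      refine Tendsto.congr' ?_ hslope
      filter_upwards [self_mem_nhdsWithin] with v hv
      have hv' : v ≠ 0 := hv
      simp [slope_def_field, sincG, hv']
    have hpure : Tendsto (sincG s) (pure (0 : ℝ)) (𝓝 s) := by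
      have : sincG s 0 = s := by simp [sincG]
      simpa [this] using (tendsto_pure_nhds (sincG s) 0)
    have : Tendsto (sincG s) (𝓝 (0 : ℝ)) (𝓝 s) := by
      rw [← nhdsNE_sup_pure]
      exact hcong.sup hpure
    have h0 : sincG s 0 = s := by simp [sincG]
    simpa [ContinuousAt, h0] using this
  · have hca : ContinuousAt (fun v : ℝ => Real.sin (s * v) / v) u := by
      exact ((Real.continuous_sin.comp (continuous_const.mul continuous_id)).continuousAt).div
        continuousAt_id hu
    refine hca.congr ?_
    filter_upwards [isOpen_compl_singleton.mem_nhds hu] with v hv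
    have hv' : v ≠ 0 := hv
    simp [sincG, hv']

/-- For `s, t > 0`, the differential operator `𝔡 = (x² − t²)∂_x² + 2x∂_x + s²x²`
commutes with the integral operator `T(f)(x) = ∫_{−t}^{t} sin(s(x+y))/(x+y) f(y) dy`
on `C_c^∞((−t,t))`: for all smooth `f` compactly supported in `(−t,t)` and all
`x ∈ (−t,t)`, `𝔡·(Tf)(x) = T(𝔡·f)(x)`. -/
theorem prolate_commutes (s t : ℝ) (hs : 0 < s) (ht : 0 < t)
    (f : ℝ → ℝ) (hf : ContDiff ℝ (⊤ : ℕ∞) f) (hsupp : tsupport f ⊆ Set.Ioo (-t) t) :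
    ∀ x ∈ Set.Ioo (-t) t,
      prolateOp s t (fun u => ∫ y in (-t)..t, sincKernel s u y * f y) x =
        ∫ y in (-t)..t, sincKernel s x y * prolateOp s t f y := by
  intro x hx
  classical
  have htt : (-t : ℝ) ≤ t := by linarith
  set L : ℝ →L[ℝ] ℝ →L[ℝ] ℝ := ContinuousLinearMap.mul ℝ ℝ with hL
  -- support facts
  have hcf : HasCompactSupport f :=
    IsCompact.of_isClosed_subset isCompact_Icc (isClosed_tsupport f)
      (hsupp.trans Set.Ioo_subset_Icc_self)
  have hvan : ∀ g : ℝ → ℝ, tsupport g ⊆ tsupport f →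
      ∀ y, y ∉ Set.Ioo (-t) t → g y = 0 :=
    fun g hg y hy => image_eq_zero_of_notMem_tsupport fun hm => hy (hsupp (hg hm))
  have hts1 : tsupport (deriv f) ⊆ tsupport f :=
    closure_minimal support_deriv_subset (isClosed_tsupport f)
  have hts2 : tsupport (deriv (deriv f)) ⊆ tsupport f :=
    (closure_minimal support_deriv_subset (isClosed_tsupport (deriv f))).trans hts1
  have hfz := hvan f subset_rfl
  have hf'z := hvan (deriv f) hts1
  have hf''z := hvan (deriv (deriv f)) hts2
  have hmem_t : (t : ℝ) ∉ Set.Ioo (-t) t := fun h => lt_irrefl t h.2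
  have hmem_mt : (-t : ℝ) ∉ Set.Ioo (-t) t := fun h => lt_irrefl (-t) h.1
  have hft0 : f t = 0 := hfz t hmem_t
  have hfmt0 : f (-t) = 0 := hfz (-t) hmem_mt
  have hdft0 : deriv f t = 0 := hf'z t hmem_t
  have hdfmt0 : deriv f (-t) = 0 := hf'z (-t) hmem_mt
  -- smoothness facts
  have hfi : ContDiff ℝ ∞ f := hf.of_le (by simp)
  have h1 := contDiff_infty_iff_deriv.mp hfi
  have hf1 : ContDiff ℝ ∞ (deriv f) := h1.2
  have h2 := contDiff_infty_iff_deriv.mp hf1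
  have hfc : Continuous f := hfi.continuous
  have hf1c : Continuous (deriv f) := hf1.continuous
  have hf2c : Continuous (deriv (deriv f)) := h2.2.continuous
  have hdf : ∀ y, HasDerivAt f (deriv f y) y := fun y => (h1.1 y).hasDerivAt
  have hdf1 : ∀ y, HasDerivAt (deriv f) (deriv (deriv f) y) y := fun y => (h2.1 y).hasDerivAt
  -- the reflected function
  have hrevcs : HasCompactSupport (fun y : ℝ => f (-y)) :=
    hcf.comp_homeomorph (Homeomorph.neg ℝ)
  have hrevcd1 : ContDiff ℝ 1 (fun y : ℝ => f (-y)) := (hf.comp contDiff_neg).of_le (by simp)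
  have hfrev1 : deriv (fun y : ℝ => f (-y)) = fun y => -deriv f (-y) :=
    funext fun y => deriv_comp_neg f y
  have hfrev2 : deriv (deriv (fun y : ℝ => f (-y))) = fun y => deriv (deriv f) (-y) := by
    rw [hfrev1]
    funext y
    rw [deriv.fun_neg, deriv_comp_neg, neg_neg]
  have hrevdcs : HasCompactSupport (deriv (fun y : ℝ => f (-y))) := hrevcs.deriv
  have h1inf : (1 : WithTop ℕ∞) ≤ ∞ := by exact_mod_cast (le_top : (1 : ℕ∞) ≤ ⊤)
  have hrevdcd1 : ContDiff ℝ 1 (deriv (fun y : ℝ => f (-y))) := by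
    rw [hfrev1]
    exact (((hf1.comp contDiff_neg).neg).of_le h1inf)
  -- local integrability of the kernel
  have hGcont : Continuous (sincG s) := continuous_sincG s
  have hGloc : LocallyIntegrable (sincG s) volume := hGcont.locallyIntegrable
  -- convolution derivatives
  have hder1 : ∀ u : ℝ, HasDerivAt (sincG s ⋆[L] fun y => f (-y))
      ((sincG s ⋆[L] deriv (fun y => f (-y))) u) u :=
    fun u => HasCompactSupport.hasDerivAt_convolution_right L hGloc hrevcs hrevcd1 u
  have hder2 : ∀ u : ℝ, HasDerivAt (sincG s ⋆[L] deriv (fun y => f (-y)))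
      ((sincG s ⋆[L] deriv (deriv (fun y => f (-y)))) u) u :=
    fun u => HasCompactSupport.hasDerivAt_convolution_right L hGloc hrevdcs hrevdcd1 u
  have hD1 : deriv (sincG s ⋆[L] fun y => f (-y)) = sincG s ⋆[L] deriv (fun y => f (-y)) :=
    funext fun u => (hder1 u).deriv
  -- moving between full-line and interval integrals
  have toInt : ∀ g : ℝ → ℝ, (∀ y, y ∉ Set.Ioo (-t) t → g y = 0) →
      (∫ y, sincG s (x + y) * g y) = ∫ y in (-t)..t, sincG s (x + y) * g y := by
    intro g hg
    rw [intervalIntegral.integral_of_le htt]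
    refine (setIntegral_eq_integral_of_forall_compl_eq_zero fun y hy => ?_).symm
    rw [hg y (fun hm => hy (Set.Ioo_subset_Ioc_self hm)), mul_zero]
  -- evaluating convolutions
  have conv_apply : ∀ h : ℝ → ℝ, (sincG s ⋆[L] h) x = ∫ y, sincG s (x + y) * h (-y) := by
    intro h
    rw [MeasureTheory.convolution_def]
    simp only [hL, ContinuousLinearMap.mul_apply']
    have hh := MeasureTheory.integral_add_left_eq_self (μ := volume)
      (fun z => sincG s z * h (x - z)) x
    rw [← hh]
    congr 1
    funext y
    congr 1
    ring_nf
  -- the function equals a convolution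
  have hconv_eq : (fun u => ∫ y in (-t)..t, sincKernel s u y * f y)
      = sincG s ⋆[L] fun y => f (-y) := by
    funext u
    have e1 : (∫ y in (-t)..t, sincKernel s u y * f y) = ∫ y, sincG s (u + y) * f y := by
      simp only [sincKernel_eq]
      rw [intervalIntegral.integral_of_le htt]
      refine setIntegral_eq_integral_of_forall_compl_eq_zero fun y hy => ?_
      rw [hfz y (fun hm => hy (Set.Ioo_subset_Ioc_self hm)), mul_zero]
    have e2 : (∫ y, sincG s (u + y) * f y)
        = ∫ z, sincG s z * f (z - u) := by
      have hh := MeasureTheory.integral_add_left_eq_self (μ := volume)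
        (fun z => sincG s z * f (z - u)) u
      rw [← hh]
      congr 1
      funext y
      congr 2
      ring
    rw [e1, e2, MeasureTheory.convolution_def]
    simp only [hL, ContinuousLinearMap.mul_apply']
    congr 1
    funext z
    congr 1
    ring_nf
  -- continuity of all the integrands
  have hKc : Continuous fun y : ℝ => sincG s (x + y) :=
    hGcont.comp (continuous_const.add continuous_id)
  have hlc : Continuous fun y : ℝ => s * (x + y) :=
    continuous_const.mul (continuous_const.add continuous_id)
  have hsc : Continuous fun y : ℝ => Real.sin (s * (x + y)) := Real.continuous_sin.comp hlc
  have hcc : Continuous fun y : ℝ => Real.cos (s * (x + y)) := Real.continuous_cos.comp hlc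
  have hxc : Continuous fun y : ℝ => x - y := continuous_const.sub continuous_id
  have iK0 : IntervalIntegrable (fun y => sincG s (x + y) * f y) volume (-t) t :=
    (hKc.mul hfc).intervalIntegrable _ _
  have iK1 : IntervalIntegrable (fun y => sincG s (x + y) * deriv f y) volume (-t) t :=
    (hKc.mul hf1c).intervalIntegrable _ _
  have iK2 : IntervalIntegrable (fun y => sincG s (x + y) * deriv (deriv f) y) volume (-t) t :=
    (hKc.mul hf2c).intervalIntegrable _ _
  -- pointwise derivative computations for the smooth replacement kernel
  have hsin : ∀ y : ℝ, HasDerivAt (fun y : ℝ => Real.sin (s * (x + y)))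
      (s * Real.cos (s * (x + y))) y := by
    intro y
    have hl : HasDerivAt (fun y : ℝ => s * (x + y)) s y := by
      simpa using ((hasDerivAt_id y).const_add x).const_mul s
    have := (Real.hasDerivAt_sin (s * (x + y))).comp y hl
    simpa [Function.comp_def, mul_comm] using this
  have hcos : ∀ y : ℝ, HasDerivAt (fun y : ℝ => Real.cos (s * (x + y)))
      (-(s * Real.sin (s * (x + y)))) y := by
    intro y
    have hl : HasDerivAt (fun y : ℝ => s * (x + y)) s y := by
      simpa using ((hasDerivAt_id y).const_add x).const_mul s
    have := (Real.hasDerivAt_cos (s * (x + y))).comp y hl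
    rw [show -Real.sin (s * (x + y)) * s = -(s * Real.sin (s * (x + y))) by ring] at this
    simpa [Function.comp_def] using this
  have hxy : ∀ y : ℝ, HasDerivAt (fun y : ℝ => x - y) (-1) y := by
    intro y
    simpa using (hasDerivAt_id y).const_sub x
  have hh : ∀ y : ℝ, HasDerivAt (fun y : ℝ => (x - y) * Real.sin (s * (x + y)))
      (-Real.sin (s * (x + y)) + (x - y) * (s * Real.cos (s * (x + y)))) y := by
    intro y
    have : HasDerivAt (fun y : ℝ => (x - y) * Real.sin (s * (x + y))) _ y :=
      (hxy y).fun_mul (hsin y)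
    convert this using 1
    ring
  have hh1 : ∀ y : ℝ, HasDerivAt
      (fun y : ℝ => -Real.sin (s * (x + y)) + (x - y) * (s * Real.cos (s * (x + y))))
      (-(2 * (s * Real.cos (s * (x + y)))) - s ^ 2 * ((x - y) * Real.sin (s * (x + y)))) y := by
    intro y
    have : HasDerivAt
        (fun y : ℝ => -Real.sin (s * (x + y)) + (x - y) * (s * Real.cos (s * (x + y)))) _ y :=
      ((hsin y).neg).add ((hxy y).fun_mul ((hcos y).const_mul s))
    convert this using 1
    ring
  -- integrability for integration by parts
  have ih1c : Continuous fun y : ℝ =>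
      -Real.sin (s * (x + y)) + (x - y) * (s * Real.cos (s * (x + y))) :=
    (hsc.neg).add (hxc.mul (continuous_const.mul hcc))
  have ih2c : Continuous fun y : ℝ =>
      -(2 * (s * Real.cos (s * (x + y)))) - s ^ 2 * ((x - y) * Real.sin (s * (x + y))) :=
    ((continuous_const.mul (continuous_const.mul hcc)).neg).sub
      (continuous_const.mul (hxc.mul hsc))
  -- the three basic interval integrals
  set X := ∫ y in (-t)..t, Real.cos (s * (x + y)) * f y with hX
  set Y := ∫ y in (-t)..t, (x - y) * Real.sin (s * (x + y)) * f y with hY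
  set Z := ∫ y in (-t)..t, (x - y) * Real.sin (s * (x + y)) * deriv (deriv f) y with hZdef
  set W := ∫ y in (-t)..t, Real.sin (s * (x + y)) * deriv f y with hWdef
  have icosf : IntervalIntegrable (fun y => Real.cos (s * (x + y)) * f y) volume (-t) t :=
    (hcc.mul hfc).intervalIntegrable _ _
  have ihf : IntervalIntegrable (fun y => (x - y) * Real.sin (s * (x + y)) * f y) volume (-t) t :=
    ((hxc.mul hsc).mul hfc).intervalIntegrable _ _
  -- integration by parts, step: W = -(s * X)
  have hW : W = -(s * X) := by
    have ibp := intervalIntegral.integral_mul_deriv_eq_deriv_mul (a := -t) (b := t)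
      (u := fun y => Real.sin (s * (x + y))) (u' := fun y => s * Real.cos (s * (x + y)))
      (v := f) (v' := deriv f)
      (fun y _ => hsin y) (fun y _ => hdf y)
      ((continuous_const.mul hcc).intervalIntegrable _ _) (hf1c.intervalIntegrable _ _)
    have e : (∫ y in (-t)..t, s * Real.cos (s * (x + y)) * f y) = s * X := by
      simp only [mul_assoc]
      rw [intervalIntegral.integral_const_mul]
    calc W = Real.sin (s * (x + t)) * f t - Real.sin (s * (x + -t)) * f (-t)
          - ∫ y in (-t)..t, s * Real.cos (s * (x + y)) * f y := ibp
      _ = -(s * X) := by rw [hft0, hfmt0, e]; ring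
  -- integration by parts twice: Z = -(2*s*X) - s^2 * Y
  have hZ : Z = -(2 * s * X) - s ^ 2 * Y := by
    have ibp1 := intervalIntegral.integral_mul_deriv_eq_deriv_mul (a := -t) (b := t)
      (u := fun y => (x - y) * Real.sin (s * (x + y)))
      (u' := fun y => -Real.sin (s * (x + y)) + (x - y) * (s * Real.cos (s * (x + y))))
      (v := deriv f) (v' := deriv (deriv f))
      (fun y _ => hh y) (fun y _ => hdf1 y)
      (ih1c.intervalIntegrable _ _) (hf2c.intervalIntegrable _ _)
    have ibp2 := intervalIntegral.integral_mul_deriv_eq_deriv_mul (a := -t) (b := t)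
      (u := fun y => -Real.sin (s * (x + y)) + (x - y) * (s * Real.cos (s * (x + y))))
      (u' := fun y => -(2 * (s * Real.cos (s * (x + y)))) - s ^ 2 * ((x - y) * Real.sin (s * (x + y))))
      (v := f) (v' := deriv f)
      (fun y _ => hh1 y) (fun y _ => hdf y)
      (ih2c.intervalIntegrable _ _) (hf1c.intervalIntegrable _ _)
    have e3 : (∫ y in (-t)..t,
        (-(2 * (s * Real.cos (s * (x + y)))) - s ^ 2 * ((x - y) * Real.sin (s * (x + y)))) * f y)
        = -(2 * s) * X - s ^ 2 * Y := by
      have e : ∀ y : ℝ,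
          (-(2 * (s * Real.cos (s * (x + y)))) - s ^ 2 * ((x - y) * Real.sin (s * (x + y)))) * f y
          = -(2 * s) * (Real.cos (s * (x + y)) * f y)
            - s ^ 2 * ((x - y) * Real.sin (s * (x + y)) * f y) := fun y => by ring
      rw [intervalIntegral.integral_congr (fun y _ => e y),
        intervalIntegral.integral_sub (icosf.const_mul _) (ihf.const_mul _),
        intervalIntegral.integral_const_mul, intervalIntegral.integral_const_mul]
    calc Z = (x - t) * Real.sin (s * (x + t)) * deriv f t
          - (x - -t) * Real.sin (s * (x + -t)) * deriv f (-t)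
          - ∫ y in (-t)..t,
              (-Real.sin (s * (x + y)) + (x - y) * (s * Real.cos (s * (x + y)))) * deriv f y := ibp1
      _ = -(∫ y in (-t)..t,
              (-Real.sin (s * (x + y)) + (x - y) * (s * Real.cos (s * (x + y)))) * deriv f y) := by
            rw [hdft0, hdfmt0]; ring
      _ = -((-Real.sin (s * (x + t)) + (x - t) * (s * Real.cos (s * (x + t)))) * f t
          - (-Real.sin (s * (x + -t)) + (x - -t) * (s * Real.cos (s * (x + -t)))) * f (-t)
          - ∫ y in (-t)..t,
            (-(2 * (s * Real.cos (s * (x + y)))) - s ^ 2 * ((x - y) * Real.sin (s * (x + y)))) * f y) := by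
            rw [ibp2]
      _ = -(2 * s * X) - s ^ 2 * Y := by rw [hft0, hfmt0, e3]; ring
  -- evaluate the convolution and its derivatives as interval integrals
  have e0 : (sincG s ⋆[L] fun y => f (-y)) x = ∫ y in (-t)..t, sincG s (x + y) * f y := by
    rw [conv_apply]
    simp only [neg_neg]
    exact toInt f hfz
  have e1 : (sincG s ⋆[L] deriv (fun y => f (-y))) x
      = -∫ y in (-t)..t, sincG s (x + y) * deriv f y := by
    rw [conv_apply, hfrev1]
    simp only [neg_neg]
    rw [← toInt (deriv f) hf'z, ← integral_neg]
    congr 1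
    funext y
    ring
  have e2 : (sincG s ⋆[L] deriv (deriv (fun y => f (-y)))) x
      = ∫ y in (-t)..t, sincG s (x + y) * deriv (deriv f) y := by
    rw [conv_apply, hfrev2]
    simp only [neg_neg]
    exact toInt (deriv (deriv f)) hf''z
  -- the left-hand side
  have hLHS : prolateOp s t (sincG s ⋆[L] fun y => f (-y)) x
      = (x ^ 2 - t ^ 2) * (∫ y in (-t)..t, sincG s (x + y) * deriv (deriv f) y)
        - 2 * x * (∫ y in (-t)..t, sincG s (x + y) * deriv f y)
        + s ^ 2 * x ^ 2 * (∫ y in (-t)..t, sincG s (x + y) * f y) := by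
    simp only [prolateOp]
    rw [hD1, (hder2 x).deriv, e0, e1, e2]
    ring
  -- rewrite the goal
  rw [hconv_eq, hLHS]
  simp only [sincKernel_eq, prolateOp]
  -- linearize the left-hand side into a single integral
  have iA1 : IntervalIntegrable
      (fun y => (x ^ 2 - t ^ 2) * (sincG s (x + y) * deriv (deriv f) y)) volume (-t) t :=
    iK2.const_mul _
  have iA2 : IntervalIntegrable
      (fun y => 2 * x * (sincG s (x + y) * deriv f y)) volume (-t) t :=
    iK1.const_mul _
  have iA3 : IntervalIntegrable
      (fun y => s ^ 2 * x ^ 2 * (sincG s (x + y) * f y)) volume (-t) t :=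
    iK0.const_mul _
  have hA : (x ^ 2 - t ^ 2) * (∫ y in (-t)..t, sincG s (x + y) * deriv (deriv f) y)
        - 2 * x * (∫ y in (-t)..t, sincG s (x + y) * deriv f y)
        + s ^ 2 * x ^ 2 * (∫ y in (-t)..t, sincG s (x + y) * f y)
      = ∫ y in (-t)..t,
          ((x ^ 2 - t ^ 2) * (sincG s (x + y) * deriv (deriv f) y)
            - 2 * x * (sincG s (x + y) * deriv f y)
            + s ^ 2 * x ^ 2 * (sincG s (x + y) * f y)) := by
    rw [intervalIntegral.integral_add (iA1.sub iA2) iA3,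
      intervalIntegral.integral_sub iA1 iA2,
      intervalIntegral.integral_const_mul, intervalIntegral.integral_const_mul,
      intervalIntegral.integral_const_mul]
  have iB : IntervalIntegrable
      (fun y => sincG s (x + y)
        * ((y ^ 2 - t ^ 2) * deriv (deriv f) y + 2 * y * deriv f y + s ^ 2 * y ^ 2 * f y))
      volume (-t) t := by
    refine (hKc.mul ?_).intervalIntegrable _ _
    exact ((((continuous_pow 2).sub continuous_const).mul hf2c).add
        ((continuous_const.mul continuous_id).mul hf1c)).add
      ((continuous_const.mul (continuous_pow 2)).mul hfc)
  have ic1 : IntervalIntegrable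
      (fun y => (x - y) * Real.sin (s * (x + y)) * deriv (deriv f) y) volume (-t) t :=
    ((hxc.mul hsc).mul hf2c).intervalIntegrable _ _
  have ic2 : IntervalIntegrable
      (fun y => 2 * (Real.sin (s * (x + y)) * deriv f y)) volume (-t) t :=
    ((hsc.mul hf1c).intervalIntegrable _ _).const_mul _
  have ic3 : IntervalIntegrable
      (fun y => s ^ 2 * ((x - y) * Real.sin (s * (x + y)) * f y)) volume (-t) t :=
    ihf.const_mul _
  -- the difference of the two integrands, simplified via the kernel identity
  have hdiff : (∫ y in (-t)..t,
        ((x ^ 2 - t ^ 2) * (sincG s (x + y) * deriv (deriv f) y)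
          - 2 * x * (sincG s (x + y) * deriv f y)
          + s ^ 2 * x ^ 2 * (sincG s (x + y) * f y)))
      - (∫ y in (-t)..t, sincG s (x + y)
          * ((y ^ 2 - t ^ 2) * deriv (deriv f) y + 2 * y * deriv f y + s ^ 2 * y ^ 2 * f y))
      = Z - 2 * W + s ^ 2 * Y := by
    rw [← intervalIntegral.integral_sub ((iA1.sub iA2).add iA3) iB]
    have hgcong : ∀ y : ℝ,
        ((x ^ 2 - t ^ 2) * (sincG s (x + y) * deriv (deriv f) y)
          - 2 * x * (sincG s (x + y) * deriv f y)
          + s ^ 2 * x ^ 2 * (sincG s (x + y) * f y))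
        - sincG s (x + y)
            * ((y ^ 2 - t ^ 2) * deriv (deriv f) y + 2 * y * deriv f y + s ^ 2 * y ^ 2 * f y)
        = (x - y) * Real.sin (s * (x + y)) * deriv (deriv f) y
          - 2 * (Real.sin (s * (x + y)) * deriv f y)
          + s ^ 2 * ((x - y) * Real.sin (s * (x + y)) * f y) := by
      intro y
      have k := mul_sincG s (x + y)
      linear_combination ((x - y) * deriv (deriv f) y - 2 * deriv f y + s ^ 2 * (x - y) * f y) * k
    rw [intervalIntegral.integral_congr (fun y _ => hgcong y),
      intervalIntegral.integral_add (ic1.sub ic2) ic3,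
      intervalIntegral.integral_sub ic1 ic2,
      intervalIntegral.integral_const_mul, intervalIntegral.integral_const_mul]
  have hzero : Z - 2 * W + s ^ 2 * Y = 0 := by
    rw [hZ, hW]; ring
  rw [hA]
  linarith [hdiff, hzero]
end

section
/- Let σ be the algebra automorphism of the Weyl algebra (differential operators with polynomial coefficients in x) induced by x ↦ −x, ∂_x ↦ −∂_x. A differential operator with polynomial coefficients is fixed by σ and formally symmetric if and only if it has the form ∑_{j=0}^ℓ ∂_x^j a_j(x²) ∂_x^j with each a_j a polynomial in x². -/
/-!
In coefficients, `σ`-fixedness says `a_j(-x) = (-1)^j a_j(x)`. An operator `∂^j f ∂^j` with `f`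
even is `σ`-fixed, since `f^{(k)}` has the parity of `k`, and it is formally symmetric by the
alternating binomial identity read off from `x^j (x+1)^j = ((x+1) - 1)^j (x+1)^j`.
Conversely, the adjoint multiplies the leading coefficient of an operator of order `n` by
`(-1)^n`, so for a symmetric operator either it vanishes or `n = 2ℓ`; then `σ`-fixedness makes it
an even polynomial `b(x²)`, and subtracting `∂^ℓ b(x²) ∂^ℓ` lowers the order while preserving
both properties.
-/

/-- Iterated polynomial derivative. -/
noncomputable def pIter (i : ℕ) (p : Polynomial ℂ) : Polynomial ℂ :=
  (fun q => Polynomial.derivative q)^[i] p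

/-- The coefficient of `∂^i` in the formal adjoint of `∑_{j ≤ n} a_j ∂^j`
(with polynomial coefficients). -/
noncomputable def adjCoeffP (n : ℕ) (a : ℕ → Polynomial ℂ) (i : ℕ) : Polynomial ℂ :=
  ∑ j ∈ Finset.range (n + 1),
    if i ≤ j then
      Polynomial.C ((-1 : ℂ) ^ j) * (j.choose (j - i) : Polynomial ℂ) * pIter (j - i) (a j)
    else 0

open Polynomial Finset

namespace Polynomial

variable {R : Type*} [CommRing R]

theorem coeff_comp_neg_X (p : R[X]) (n : ℕ) : (p.comp (-X)).coeff n = (-1) ^ n * p.coeff n := by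
  rw [show (-X : R[X]) = C (-1) * X by simp, comp_C_mul_X_coeff, mul_comm]

theorem comp_neg_X_eq_self_iff [IsAddTorsionFree R] {p : R[X]} :
    p.comp (-X) = p ↔ ∃ q : R[X], p = q.comp (X ^ 2) := by
  constructor
  · intro hp
    refine ⟨contract 2 p, ext fun n => ?_⟩
    rw [← expand_eq_comp_X_pow, coeff_expand two_pos, coeff_contract two_ne_zero]
    split_ifs with h
    · rw [Nat.div_mul_cancel h]
    · have h' := coeff_comp_neg_X p n
      rw [hp, (Nat.not_even_iff_odd.mp (even_iff_two_dvd.not.mpr h)).neg_one_pow, neg_one_mul] at h'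
      exact self_eq_neg.mp h'
  · rintro ⟨q, rfl⟩
    rw [comp_assoc, pow_comp, X_comp, neg_sq]

theorem iterate_derivative_comp_neg_X (p : R[X]) (k : ℕ) :
    derivative^[k] (p.comp (-X)) = (-1) ^ k * (derivative^[k] p).comp (-X) := by
  induction k generalizing p with
  | zero => simp
  | succ k ih => simp [ih (derivative p), derivative_comp, pow_succ]

theorem iterate_derivative_comp_neg_X_of_comp_neg_X_eq {p : R[X]} (hp : p.comp (-X) = p) (k : ℕ) :
    (derivative^[k] p).comp (-X) = (-1) ^ k * derivative^[k] p := by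
  have h := iterate_derivative_comp_neg_X p k
  rw [hp] at h
  nth_rw 2 [h]
  rw [← mul_assoc, ← mul_pow, neg_one_mul, neg_neg, one_pow, one_mul]

end Polynomial

theorem Int.alternating_sum_range_choose_mul_choose {i j : ℕ} (hi : i ≤ 2 * j) :
    ∑ r ∈ Finset.range (2 * j + 1), (-1 : ℤ) ^ r * r.choose i * j.choose (2 * j - r) =
      j.choose (2 * j - i) := by
  have hbinom : (X : ℤ[X]) ^ j * (X + 1) ^ j =
      ∑ m ∈ Finset.range (j + 1), C ((-1) ^ (j + m) * (j.choose m : ℤ)) * (X + 1) ^ (j + m) := by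
    conv_lhs => rw [← add_sub_cancel_right X 1, sub_pow, sum_mul]
    refine sum_congr rfl fun m _ => ?_
    simp only [map_mul, map_pow, map_neg, map_one, map_natCast, one_pow, mul_one, pow_add]
    ring
  have hcoeff := congrArg (coeff · i) hbinom
  simp only [coeff_X_pow_mul', finsetSum_coeff, coeff_C_mul, coeff_X_add_one_pow] at hcoeff
  have hshift : ∀ m ∈ Finset.range (j + 1),
      (-1 : ℤ) ^ (j + m) * ((j + m).choose i : ℤ) * (j.choose (2 * j - (j + m)) : ℤ) =
        (-1) ^ (j + m) * (j.choose m : ℤ) * ((j + m).choose i : ℤ) := by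
    intro m hm
    rw [show 2 * j - (j + m) = j - m by omega, Nat.choose_symm (by simp at hm; omega)]
    ring
  rw [show 2 * j + 1 = j + (j + 1) by ring, Finset.sum_range_add, Finset.sum_eq_zero, zero_add,
    Finset.sum_congr rfl hshift, ← hcoeff]
  · split_ifs with h
    · rw [show 2 * j - i = j - (i - j) by omega, Nat.choose_symm (by omega)]
    · simp [Nat.choose_eq_zero_of_lt (by omega : j < 2 * j - i)]
  · intro r hr
    simp [Nat.choose_eq_zero_of_lt (by simp at hr; omega : j < 2 * j - r)]

/-- `∂^j f ∂^j = ∑ i, sandwichCoeff j f i * ∂^i`, by the Leibniz rule. -/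
noncomputable def sandwichCoeff (j : ℕ) (f : ℂ[X]) (i : ℕ) : ℂ[X] :=
  if j ≤ i ∧ i ≤ 2 * j then (j.choose (2 * j - i) : ℂ[X]) * pIter (2 * j - i) f else 0

theorem pIter_eq_iterate (i : ℕ) : pIter i = derivative^[i] := rfl

section Sandwich

variable (j : ℕ)

theorem sandwichCoeff_of_le {i : ℕ} (hi : i ≤ 2 * j) (f : ℂ[X]) :
    sandwichCoeff j f i = (j.choose (2 * j - i) : ℂ[X]) * derivative^[2 * j - i] f := by
  unfold sandwichCoeff
  by_cases h : j ≤ i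
  · rw [if_pos ⟨h, hi⟩, pIter_eq_iterate]
  · rw [if_neg (by omega), Nat.choose_eq_zero_of_lt (by omega), Nat.cast_zero, zero_mul]

theorem sandwichCoeff_of_lt {i : ℕ} (hi : 2 * j < i) (f : ℂ[X]) : sandwichCoeff j f i = 0 :=
  if_neg (by omega)

theorem sandwichCoeff_two_mul (f : ℂ[X]) : sandwichCoeff j f (2 * j) = f := by
  simp [sandwichCoeff_of_le]

theorem sandwichCoeff_zero : sandwichCoeff j 0 = 0 := by
  ext1 i
  simp [sandwichCoeff, pIter_eq_iterate]

theorem sandwichCoeff_add (f g : ℂ[X]) :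
    sandwichCoeff j (f + g) = sandwichCoeff j f + sandwichCoeff j g := by
  ext1 i
  simp only [sandwichCoeff, pIter_eq_iterate, iterate_map_add, Pi.add_apply]
  split_ifs <;> simp [mul_add]

end Sandwich

/-- `σ (∑ a_j ∂^j) = ∑ (-1)^j a_j(-x) ∂^j`. -/
noncomputable def weylSigma : (ℕ → ℂ[X]) →+ (ℕ → ℂ[X]) where
  toFun a j := C ((-1 : ℂ) ^ j) * (a j).comp (-X)
  map_zero' := by ext1 j; simp
  map_add' a b := by ext1 j; simp [add_comp, mul_add]

theorem weylSigma_apply (a : ℕ → ℂ[X]) (j : ℕ) :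
    weylSigma a j = C ((-1 : ℂ) ^ j) * (a j).comp (-X) := rfl

noncomputable def formalAdjoint (n : ℕ) : (ℕ → ℂ[X]) →+ (ℕ → ℂ[X]) where
  toFun := adjCoeffP n
  map_zero' := by ext1 i; simp [adjCoeffP, pIter_eq_iterate]
  map_add' a b := by
    ext1 i
    simp only [adjCoeffP, Pi.add_apply, ← sum_add_distrib]
    refine sum_congr rfl fun r _ => ?_
    split_ifs <;> simp [pIter_eq_iterate, iterate_map_add, mul_add]

theorem formalAdjoint_apply (n : ℕ) (a : ℕ → ℂ[X]) : formalAdjoint n a = adjCoeffP n a := rfl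

theorem formalAdjoint_of_le {n N : ℕ} (hnN : n ≤ N) {a : ℕ → ℂ[X]}
    (ha : ∀ j, n < j → a j = 0) : formalAdjoint N a = formalAdjoint n a := by
  ext1 i
  refine (sum_subset (range_subset_range.mpr (by omega)) fun r hrN hrn => ?_).symm
  simp [ha r (by simp at hrN hrn; omega), pIter_eq_iterate]

theorem formalAdjoint_apply_self (n : ℕ) (a : ℕ → ℂ[X]) :
    formalAdjoint n a n = C ((-1 : ℂ) ^ n) * a n := by
  rw [formalAdjoint_apply, adjCoeffP, sum_eq_single_of_mem n (self_mem_range_succ n)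
    fun r hr hrn => if_neg (by simp at hr; omega)]
  simp [pIter_eq_iterate]

theorem weylSigma_sandwichCoeff (j : ℕ) {f : ℂ[X]} (hf : f.comp (-X) = f) :
    weylSigma (sandwichCoeff j f) = sandwichCoeff j f := by
  ext1 i
  rw [weylSigma_apply]
  rcases le_or_gt i (2 * j) with hi | hi
  · have hsign : C ((-1 : ℂ) ^ i) * (-1) ^ (2 * j - i) = 1 := by
      rw [map_pow, map_neg, map_one, ← pow_add, Nat.add_sub_cancel' hi, pow_mul]
      simp
    rw [sandwichCoeff_of_le j hi, mul_comp, natCast_comp,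
      iterate_derivative_comp_neg_X_of_comp_neg_X_eq hf]
    linear_combination ((j.choose (2 * j - i) : ℂ[X]) * derivative^[2 * j - i] f) * hsign
  · simp [sandwichCoeff_of_lt j hi]

theorem formalAdjoint_sandwichCoeff {j N : ℕ} (hN : 2 * j ≤ N) (f : ℂ[X]) :
    formalAdjoint N (sandwichCoeff j f) = sandwichCoeff j f := by
  rw [formalAdjoint_of_le hN fun r hr => sandwichCoeff_of_lt j hr f]
  ext1 i
  rw [formalAdjoint_apply, adjCoeffP]
  rcases le_or_gt i (2 * j) with hi | hi
  · have hterm : ∀ r ∈ range (2 * j + 1),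
        (if i ≤ r then C ((-1 : ℂ) ^ r) * (r.choose (r - i) : ℂ[X]) *
          pIter (r - i) (sandwichCoeff j f r) else 0) =
        C (((-1 : ℤ) ^ r * r.choose i * j.choose (2 * j - r) : ℤ) : ℂ) *
          derivative^[2 * j - i] f := by
      intro r hr
      rw [sandwichCoeff_of_le j (by simp at hr; omega)]
      split_ifs with hir
      · rw [pIter_eq_iterate, iterate_derivative_natCast_mul, ← Function.iterate_add_apply,
          show r - i + (2 * j - r) = 2 * j - i by simp at hr; omega, Nat.choose_symm hir]
        simp only [Int.cast_mul, Int.cast_pow, Int.cast_neg, Int.cast_one, Int.cast_natCast,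
          map_mul, map_pow, map_neg, map_one, map_natCast]
        ring
      · simp [Nat.choose_eq_zero_of_lt (by omega : r < i)]
    rw [sum_congr rfl hterm, ← sum_mul, ← map_sum, ← Int.cast_sum,
      Int.alternating_sum_range_choose_mul_choose hi, sandwichCoeff_of_le j hi]
    simp
  · rw [sandwichCoeff_of_lt j hi, sum_eq_zero]
    exact fun r hr => if_neg (by simp at hr; omega)

theorem exists_sandwichCoeff_eq_apply {n : ℕ} {a : ℕ → ℂ[X]} (hσ : weylSigma a n = a n)
    (hsym : formalAdjoint n a n = a n) :
    ∃ (ℓ : ℕ) (q : ℂ[X]), 2 * ℓ ≤ n ∧ a n = sandwichCoeff ℓ (q.comp (X ^ 2)) n := by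
  rcases n.even_or_odd with ⟨ℓ, rfl⟩ | hodd
  · rw [weylSigma_apply, ← two_mul, pow_mul] at hσ
    simp only [neg_one_sq, one_pow, map_one, one_mul] at hσ
    obtain ⟨q, hq⟩ := comp_neg_X_eq_self_iff.mp hσ
    exact ⟨ℓ, q, (two_mul ℓ).le, by rw [← two_mul, sandwichCoeff_two_mul, ← hq]⟩
  · rw [formalAdjoint_apply_self, hodd.neg_one_pow, map_neg, map_one, neg_one_mul, eq_comm,
      self_eq_neg] at hsym
    exact ⟨0, 0, by simp, by rw [hsym, zero_comp, sandwichCoeff_zero]; rfl⟩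

theorem exists_finsupp_eq_sum_sandwichCoeff (n : ℕ) {a : ℕ → ℂ[X]} (ha : ∀ j, n ≤ j → a j = 0)
    (hσ : weylSigma a = a) (hsym : formalAdjoint n a = a) :
    ∃ b : ℕ →₀ ℂ[X], a = b.sum fun j q => sandwichCoeff j (q.comp (X ^ 2)) := by
  induction n generalizing a with
  | zero => exact ⟨0, funext fun j => ha j j.zero_le⟩
  | succ n ih =>
    have hsym' : formalAdjoint n a = a := (formalAdjoint_of_le n.le_succ ha).symm.trans hsym
    obtain ⟨ℓ, q, hℓ, htop⟩ := exists_sandwichCoeff_eq_apply (congrFun hσ n) (congrFun hsym' n)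
    have hsupp : ∀ j, n ≤ j → (a - sandwichCoeff ℓ (q.comp (X ^ 2))) j = 0 := by
      intro j hj
      rcases hj.eq_or_lt with rfl | hj
      · exact sub_eq_zero.mpr htop
      · rw [Pi.sub_apply, ha j hj, sandwichCoeff_of_lt ℓ (by omega : 2 * ℓ < j), sub_zero]
    obtain ⟨b, hb⟩ := ih hsupp
      (by rw [map_sub, hσ, weylSigma_sandwichCoeff ℓ (comp_neg_X_eq_self_iff.mpr ⟨q, rfl⟩)])
      (by rw [map_sub, hsym', formalAdjoint_sandwichCoeff hℓ])
    have hzero : ∀ j, sandwichCoeff j ((0 : ℂ[X]).comp (X ^ 2)) = 0 := fun j => by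
      rw [zero_comp, sandwichCoeff_zero]
    refine ⟨b + Finsupp.single ℓ q, ?_⟩
    rw [Finsupp.sum_add_index' hzero fun j f g => by rw [add_comp, sandwichCoeff_add],
      Finsupp.sum_single_index (hzero ℓ), ← hb, sub_add_cancel]

theorem exists_eq_sum_range_sandwichCoeff {n : ℕ} {a : ℕ → ℂ[X]} (ha : ∀ j, n < j → a j = 0)
    (hσ : weylSigma a = a) (hsym : formalAdjoint n a = a) :
    ∃ (ℓ : ℕ) (b : ℕ → ℂ[X]), a = ∑ j ∈ range (ℓ + 1), sandwichCoeff j ((b j).comp (X ^ 2)) := by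
  obtain ⟨b, hb⟩ := exists_finsupp_eq_sum_sandwichCoeff (n + 1) ha hσ
    ((formalAdjoint_of_le n.le_succ ha).trans hsym)
  have hsupp : b.support ⊆ range (b.support.sup id + 1) := fun j hj =>
    mem_range_succ_iff.mpr (le_sup (f := id) hj)
  exact ⟨_, b, hb.trans (b.sum_of_support_subset hsupp _ fun j _ => by
    rw [zero_comp, sandwichCoeff_zero])⟩

/-- A differential operator `∑_{j ≤ n} a_j(x) ∂^j` with polynomial coefficients is fixed
by the automorphism `σ` of the Weyl algebra induced by `x ↦ −x`, `∂ ↦ −∂` (i.e.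
`(-1)^j a_j(−x) = a_j(x)` for all `j`), and formally symmetric, if and only if it has
the form `∑_{j ≤ ℓ} ∂^j b_j(x²) ∂^j` with each `b_j(x²)` a polynomial in `x²`. -/
theorem sigma_fixed_symmetric_iff (n : ℕ) (a : ℕ → Polynomial ℂ)
    (ha : ∀ j, n < j → a j = 0) :
    ((∀ j, Polynomial.C ((-1 : ℂ) ^ j) * (a j).comp (-Polynomial.X) = a j) ∧
        ∀ i, adjCoeffP n a i = a i) ↔
      ∃ (ℓ : ℕ) (b : ℕ → Polynomial ℂ), ∀ i,
        a i = ∑ j ∈ Finset.range (ℓ + 1),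
          if j ≤ i ∧ i ≤ 2 * j then
            (j.choose (2 * j - i) : Polynomial ℂ) *
              pIter (2 * j - i) ((b j).comp (Polynomial.X ^ 2))
          else 0 := by
  change (∀ j, weylSigma a j = a j) ∧ (∀ i, formalAdjoint n a i = a i) ↔
    ∃ (ℓ : ℕ) (b : ℕ → ℂ[X]), ∀ i,
      a i = ∑ j ∈ range (ℓ + 1), sandwichCoeff j ((b j).comp (X ^ 2)) i
  simp only [← funext_iff, ← Finset.sum_apply]
  constructor
  · rintro ⟨hσ, hsym⟩
    exact exists_eq_sum_range_sandwichCoeff ha hσ hsym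
  · rintro ⟨ℓ, b, rfl⟩
    refine ⟨?_, ?_⟩
    · rw [map_sum]
      exact sum_congr rfl fun j _ => weylSigma_sandwichCoeff j (comp_neg_X_eq_self_iff.mpr ⟨b j, rfl⟩)
    · rw [← formalAdjoint_of_le (le_max_left n (2 * ℓ)) ha, map_sum]
      exact sum_congr rfl fun j hj => formalAdjoint_sandwichCoeff (by simp at hj; omega) _
end
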